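/- Let ρ be a standard barrier function and let (σ_k^{(1)}), (σ_k^{(2)}) be sequences of positive reals with σ_k^{(1)} → 0, σ_k^{(2)} → 0 and ρ(−σ_k^{(2)}; σ_k^{(1)}) → 0 as k → ∞; set P_k(ω) = ρ(ω − σ_k^{(2)}; σ_k^{(1)}) (the modified barrier family). Then: (i) for every ω ≤ 0, P_k(ω) → 0 as k → ∞; and (ii) for every real sequence (ω_k), if lim sup_{k→∞} P_k(ω_k) < +∞ then lim sup_{k→∞} ω_k ≤ 0. -/

import Mathlib

open Filter Topology

theorem tendsto_zero_of_monotone_of_le {ι : Type*} {l : Filter ι} (f : ι → ℝ → EReal)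
    (hnn : ∀ k x, 0 ≤ f k x) (hmono : ∀ k, Monotone (f k)) {a b : ι → ℝ}
    (hba : ∀ k, b k ≤ a k) (ha : Tendsto (fun k => f k (a k)) l (𝓝 0)) :
    Tendsto (fun k => f k (b k)) l (𝓝 0) :=
  tendsto_of_tendsto_of_tendsto_of_le_of_le tendsto_const_nhds ha
    (fun k => hnn k (b k)) (fun k => hmono k (hba k))

theorem frequently_pos_sub_of_pos_limsup {ι : Type*} {l : Filter ι} {x s : ι → ℝ}
    (hs : Tendsto s l (𝓝 0)) (hx : 0 < limsup (fun k => (x k : EReal)) l) :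
    ∃ᶠ k in l, 0 < x k - s k := by
  obtain ⟨r, hr_pos, hr_lt⟩ := EReal.lt_iff_exists_real_btwn.mp hx
  have hx_gt : ∃ᶠ k in l, (r : EReal) < x k := frequently_lt_of_lt_limsup (h := hr_lt)
  have hs_lt : ∀ᶠ k in l, s k < r := hs.eventually (gt_mem_nhds (EReal.coe_pos.mp hr_pos))
  exact (hx_gt.and_eventually hs_lt).mono fun k ⟨hxk, hsk⟩ => by
    linarith [EReal.coe_lt_coe_iff.mp hxk]

theorem modified_barrier_family_properties
    -- `ρ : ℝ × (0,∞) → [0,+∞]` is a standard barrier function: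
    (ρ : ℝ → ℝ → EReal)
    (hnn : ∀ ω : ℝ, ∀ σ : ℝ, 0 < σ → 0 ≤ ρ ω σ)
    (hmono : ∀ σ : ℝ, 0 < σ → Monotone fun ω => ρ ω σ)
    (htop : ∀ σ : ℝ, 0 < σ → ∀ ω : ℝ, 0 ≤ ω → ρ ω σ = ⊤)
    -- parameter sequences:
    (σ₁ σ₂ : ℕ → ℝ) (hσ₁pos : ∀ k, 0 < σ₁ k)
    (hσ₂0 : Tendsto σ₂ atTop (𝓝 0))
    (hshift : Tendsto (fun k => ρ (-σ₂ k) (σ₁ k)) atTop (𝓝 0)) :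
    -- (i): for every ω ≤ 0, P_k(ω) = ρ(ω − σ₂ k; σ₁ k) → 0
    (∀ ω : ℝ, ω ≤ 0 →
      Tendsto (fun k => ρ (ω - σ₂ k) (σ₁ k)) atTop (𝓝 0)) ∧
    -- (ii): limsup P_k(ω_k) < +∞ implies limsup ω_k ≤ 0
    (∀ ω : ℕ → ℝ,
      limsup (fun k => ρ (ω k - σ₂ k) (σ₁ k)) atTop < ⊤ →
      limsup (fun k => ((ω k : ℝ) : EReal)) atTop ≤ 0) := by
  refine ⟨fun ω hω => ?_, fun ω hlim => ?_⟩
  · exact tendsto_zero_of_monotone_of_le (fun k ω => ρ ω (σ₁ k))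
      (fun k ω => hnn ω _ (hσ₁pos k)) (fun k => hmono _ (hσ₁pos k))
      (fun k => by linarith) hshift
  · by_contra! hpos
    have hfreq_top : ∃ᶠ k in atTop, ⊤ ≤ ρ (ω k - σ₂ k) (σ₁ k) :=
      (frequently_pos_sub_of_pos_limsup hσ₂0 hpos).mono fun k hk =>
        (htop _ (hσ₁pos k) _ hk.le).ge
    exact (le_limsup_of_frequently_le' hfreq_top).not_gt hlim
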